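/- arXiv:1907.04172 — 3 statements merged into one kernel-verified Lean document; each statement's English description precedes it below -/
import Mathlib

section
/- Let q, λ ∈ ℂ with |q| < 1, λ ≠ 0, 1 + λ² ≠ 0, and suppose λ²q^k ≠ 1 and λ² ≠ q^k for all integers k ≥ 1. Set α = λ/(1+λ²) and λ̄ = 1/λ, and let P'_w, Q'_w be given by the recurrences with this α. Let w ≥ 0 be an integer, and set A'_w = λ̄^w ψ(λ,q²) ψ(λ̄,q^{w+2}) − λ^w ψ(λ̄,q²) ψ(λ,q^{w+2}) and D'_w = (1+λ²)[λ̄^w ψ(λ,q) ψ(λ̄,q^{w+2}) − λ^{w+2} ψ(λ̄,q) ψ(λ,q^{w+2})]. If Q'_w ≠ 0, D'_w ≠ 0 and D'_w ≠ λ²(1−q)A'_w, then P'_w/Q'_w = 1 / (1 − λ²(1−q)A'_w / D'_w). -/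
/-!
STATEMENT 5 (Theorem 2, q-secant case): the convergents `P'_w / Q'_w` of the continued
fraction are given explicitly in terms of the basic hypergeometric series `ψ`.
-/

open Complex

/-- The `q`-Pochhammer symbol `(a;q)_k = ∏_{j=0}^{k-1} (1 - a q^j)`. -/
noncomputable def qPoch (a q : ℂ) (k : ℕ) : ℂ := ∏ j ∈ Finset.range k, (1 - a * q ^ j)

/-- `ψ(λ,x) = Σ_k (-λ²q;q²)_k x^k / ((q;q)_k (λ²q;q)_k) = ₂φ₁(iλ√q, -iλ√q; λ²q; q, x)`. -/
noncomputable def psi (q lam x : ℂ) : ℂ :=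
  ∑' k : ℕ, qPoch (-(lam ^ 2 * q)) (q ^ 2) k * x ^ k / (qPoch q q k * qPoch (lam ^ 2 * q) q k)

/-- `Pseq' α q (w+1) = P'_w`: `P'_{-1} = 0`, `P'_0 = 1`, and
`P'_w = P'_{w-1} - α²(1-q^w)² P'_{w-2}` for `w ≥ 1`. -/
noncomputable def Pseq' (α q : ℂ) : ℕ → ℂ
  | 0 => 0
  | 1 => 1
  | n + 2 => Pseq' α q (n + 1) - α ^ 2 * (1 - q ^ (n + 1)) ^ 2 * Pseq' α q n

/-- `Qseq' α q (w+1) = Q'_w`: `Q'_{-1} = 1`, `Q'_0 = 1`, and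
`Q'_w = Q'_{w-1} - α²(1-q^w)² Q'_{w-2}` for `w ≥ 1`. -/
noncomputable def Qseq' (α q : ℂ) : ℕ → ℂ
  | 0 => 1
  | 1 => 1
  | n + 2 => Qseq' α q (n + 1) - α ^ 2 * (1 - q ^ (n + 1)) ^ 2 * Qseq' α q n

/-!
The coefficients `c_k` of `ψ(λ, ·)` satisfy
`c_{k+1} (1 - q^{k+1}) (1 - λ² q^{k+1}) = c_k (1 + λ² q^{2k+1})`, which gives the
`q`-difference equation `(1 - x) ψ(x) = (1 + λ²) ψ(q x) - λ² (1 - q x) ψ(q² x)`.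
At `x = q^{n+1}` it says that `λ^n ψ(λ, q^{n+1})` and `λ̄^n ψ(λ̄, q^{n+1})` both solve
`(1 - q^{n+2}) y_{n+2} = (λ + λ̄) y_{n+1} - (1 - q^{n+1}) y_n`.
Since `α (λ + λ̄) = 1`, multiplying a solution by `α^n (q;q)_n` produces a solution of the
recurrence of `P'` and `Q'`, hence equals `y_0 (Q'_{n-1} - P'_{n-1}) + α (1 - q) y_1 P'_{n-1}`.
`A'_w` and `D'_w` are the values at `n = w + 1` of two combinations of the `ψ`-solutions, the
first vanishing at `n = 1` and the second at `n = 0`. Hence, after multiplication by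
`α^{w+1} (q;q)_{w+1}`, they become `c (Q'_w - P'_w)` and `-λ² (1 - q) c P'_w` for one
constant `c`, and the formula follows.
-/

open Filter Topology

theorem summable_of_mul_succ_eq {𝕜 : Type*} [NormedField 𝕜] [CompleteSpace 𝕜]
    {f a b : ℕ → 𝕜} {r : 𝕜} (hr : ‖r‖ < 1)
    (ha : Tendsto a atTop (𝓝 1)) (hb : Tendsto b atTop (𝓝 r))
    (h : ∀ k, f (k + 1) * a k = f k * b k) : Summable f := by
  obtain ⟨ρ, hrρ, hρ⟩ := exists_between hr
  refine summable_of_ratio_norm_eventually_le hρ ?_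
  have hρa : Tendsto (fun k => ρ * ‖a k‖) atTop (𝓝 ρ) := by
    simpa using ha.norm.const_mul ρ
  filter_upwards [hb.norm.eventually_lt hρa hrρ] with k hk
  have ha0 : 0 < ‖a k‖ :=
    pos_of_mul_pos_right ((norm_nonneg _).trans_lt hk) ((norm_nonneg r).trans hrρ.le)
  refine le_of_mul_le_mul_right ?_ ha0
  calc ‖f (k + 1)‖ * ‖a k‖ = ‖f k‖ * ‖b k‖ := by rw [← norm_mul, ← norm_mul, h]
    _ ≤ ‖f k‖ * (ρ * ‖a k‖) := by gcongr
    _ = ρ * ‖f k‖ * ‖a k‖ := by ring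

theorem qPoch_succ (a q : ℂ) (k : ℕ) : qPoch a q (k + 1) = qPoch a q k * (1 - a * q ^ k) :=
  Finset.prod_range_succ _ _

theorem qPoch_ne_zero {a q : ℂ} {k : ℕ} (h : ∀ j < k, a * q ^ j ≠ 1) : qPoch a q k ≠ 0 :=
  Finset.prod_ne_zero_iff.2 fun j hj => sub_ne_zero.2 (h j (Finset.mem_range.1 hj)).symm

theorem pow_succ_ne_one {q : ℂ} (hq : ‖q‖ < 1) (k : ℕ) : q ^ (k + 1) ≠ 1 := fun h =>
  (pow_lt_one₀ (norm_nonneg q) hq k.succ_ne_zero).ne (by rw [← norm_pow, h, norm_one])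

theorem qPoch_self_ne_zero {q : ℂ} (hq : ‖q‖ < 1) (k : ℕ) : qPoch q q k ≠ 0 :=
  qPoch_ne_zero fun j _ => by rw [← pow_succ']; exact pow_succ_ne_one hq j

noncomputable def psiCoeff (q lam : ℂ) (k : ℕ) : ℂ :=
  qPoch (-(lam ^ 2 * q)) (q ^ 2) k / (qPoch q q k * qPoch (lam ^ 2 * q) q k)

theorem psiCoeff_succ_mul {q lam : ℂ} (hq : ‖q‖ < 1)
    (hlam : ∀ k : ℕ, lam ^ 2 * q ^ (k + 1) ≠ 1) (k : ℕ) :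
    psiCoeff q lam (k + 1) * ((1 - q ^ (k + 1)) * (1 - lam ^ 2 * q ^ (k + 1)))
      = psiCoeff q lam k * (1 + lam ^ 2 * q ^ (2 * k + 1)) := by
  have hqq := qPoch_self_ne_zero hq k
  have hlq : qPoch (lam ^ 2 * q) q k ≠ 0 := qPoch_ne_zero fun j _ => by
    rw [mul_assoc, ← pow_succ']; exact hlam j
  have h1 : 1 - q ^ (k + 1) ≠ 0 := sub_ne_zero.2 (pow_succ_ne_one hq k).symm
  have h2 : 1 - lam ^ 2 * q ^ (k + 1) ≠ 0 := sub_ne_zero.2 (hlam k).symm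
  have e1 : 1 - q * q ^ k = 1 - q ^ (k + 1) := by ring
  have e2 : 1 - lam ^ 2 * q * q ^ k = 1 - lam ^ 2 * q ^ (k + 1) := by ring
  have e3 : 1 - -(lam ^ 2 * q) * (q ^ 2) ^ k = 1 + lam ^ 2 * q ^ (2 * k + 1) := by ring
  simp only [psiCoeff, qPoch_succ, e1, e2, e3]
  field_simp

theorem hasSum_psi {q lam x : ℂ} (hq : ‖q‖ < 1)
    (hlam : ∀ k : ℕ, lam ^ 2 * q ^ (k + 1) ≠ 1) (hx : ‖x‖ < 1) :
    HasSum (fun k => psiCoeff q lam k * x ^ k) (psi q lam x) := by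
  have hq0 : Tendsto (fun k : ℕ => q ^ k) atTop (𝓝 0) :=
    tendsto_pow_atTop_nhds_zero_of_norm_lt_one hq
  have hq1 : Tendsto (fun k : ℕ => q ^ (k + 1)) atTop (𝓝 0) :=
    hq0.comp (tendsto_add_atTop_nat 1)
  have hq2 : Tendsto (fun k : ℕ => q ^ (2 * k + 1)) atTop (𝓝 0) :=
    hq0.comp (tendsto_atTop_mono (fun k => show k ≤ 2 * k + 1 by omega) tendsto_id)
  have hsum : Summable fun k => psiCoeff q lam k * x ^ k := by
    refine summable_of_mul_succ_eq hx
      (a := fun k => (1 - q ^ (k + 1)) * (1 - lam ^ 2 * q ^ (k + 1)))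
      (b := fun k => x * (1 + lam ^ 2 * q ^ (2 * k + 1))) ?_ ?_ fun k => ?_
    · simpa using (hq1.const_sub 1).mul ((hq1.const_mul (lam ^ 2)).const_sub 1)
    · simpa using ((hq2.const_mul (lam ^ 2)).const_add 1).const_mul x
    · linear_combination x ^ (k + 1) * psiCoeff_succ_mul hq hlam k
  convert hsum.hasSum using 1
  exact tsum_congr fun k => by simp only [psiCoeff]; ring

theorem psi_qDifference {q lam x : ℂ} (hq : ‖q‖ < 1)
    (hlam : ∀ k : ℕ, lam ^ 2 * q ^ (k + 1) ≠ 1) (hx : ‖x‖ < 1) :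
    (1 - x) * psi q lam x
      = (1 + lam ^ 2) * psi q lam (q * x) - lam ^ 2 * (1 - q * x) * psi q lam (q ^ 2 * x) := by
  have hqx : ‖q * x‖ < 1 := by
    rw [norm_mul]; exact mul_lt_one_of_nonneg_of_lt_one_left (norm_nonneg q) hq hx.le
  have hq2x : ‖q ^ 2 * x‖ < 1 := by
    rw [norm_mul, norm_pow]
    exact mul_lt_one_of_nonneg_of_lt_one_left (by positivity)
      (pow_lt_one₀ (norm_nonneg q) hq two_ne_zero) hx.le
  have S1 := hasSum_psi hq hlam hx
  have S2 := hasSum_psi hq hlam hqx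
  have S3 := hasSum_psi hq hlam hq2x
  set c := psiCoeff q lam
  have hT : HasSum (fun k => c k * x ^ k * ((1 - q ^ k) * (1 - lam ^ 2 * q ^ k)))
      (psi q lam x - (1 + lam ^ 2) * psi q lam (q * x) + lam ^ 2 * psi q lam (q ^ 2 * x)) := by
    refine ((S1.sub (S2.mul_left (1 + lam ^ 2))).add (S3.mul_left (lam ^ 2))).congr_fun
      fun k => by ring
  -- the coefficient recurrence turns the `(k+1)`-st term of `hT` into the `k`-th terms of
  -- `x ψ(x)` and `λ² q x ψ(q² x)`
  have hT_succ : HasSum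
      (fun k => c (k + 1) * x ^ (k + 1) * ((1 - q ^ (k + 1)) * (1 - lam ^ 2 * q ^ (k + 1))))
      (x * psi q lam x + lam ^ 2 * q * x * psi q lam (q ^ 2 * x)) := by
    refine ((S1.mul_left x).add (S3.mul_left (lam ^ 2 * q * x))).congr_fun fun k => by
      linear_combination x ^ (k + 1) * psiCoeff_succ_mul hq hlam k
  have h := ((hasSum_nat_add_iff' 1).2 hT).unique hT_succ
  simp only [Finset.range_one, Finset.sum_singleton, pow_zero, sub_self, zero_mul, mul_zero,
    sub_zero] at h
  linear_combination h

def SolvesQRecurrence (q s : ℂ) (y : ℕ → ℂ) : Prop :=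
  ∀ n, (1 - q ^ (n + 2)) * y (n + 2) = s * y (n + 1) - (1 - q ^ (n + 1)) * y n

def SolvesConvergentRecurrence (α q : ℂ) (X : ℕ → ℂ) : Prop :=
  ∀ n, X (n + 2) = X (n + 1) - α ^ 2 * (1 - q ^ (n + 1)) ^ 2 * X n

theorem solvesQRecurrence_pow_mul_psi {q lam mu : ℂ} (hq : ‖q‖ < 1)
    (hlam : ∀ k : ℕ, lam ^ 2 * q ^ (k + 1) ≠ 1) (hmu : lam * mu = 1) :
    SolvesQRecurrence q (lam + mu) fun n => lam ^ n * psi q lam (q ^ (n + 1)) := by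
  intro n
  have h := psi_qDifference hq hlam (x := q ^ (n + 1))
    (by rw [norm_pow]; exact pow_lt_one₀ (norm_nonneg q) hq n.succ_ne_zero)
  have e1 : q * q ^ (n + 1) = q ^ (n + 1 + 1) := by ring
  have e2 : q ^ 2 * q ^ (n + 1) = q ^ (n + 2 + 1) := by ring
  rw [e1, e2] at h
  linear_combination lam ^ n * h - lam ^ n * psi q lam (q ^ (n + 2)) * hmu

theorem SolvesQRecurrence.mul_add_mul {q s : ℂ} {y z : ℕ → ℂ} (hy : SolvesQRecurrence q s y)
    (hz : SolvesQRecurrence q s z) (a b : ℂ) :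
    SolvesQRecurrence q s fun n => a * y n + b * z n := fun n => by
  linear_combination a * hy n + b * hz n

theorem SolvesQRecurrence.solvesConvergentRecurrence {q s α : ℂ} {y : ℕ → ℂ}
    (hy : SolvesQRecurrence q s y) (hs : α * s = 1) :
    SolvesConvergentRecurrence α q fun n => α ^ n * qPoch q q n * y n := fun n => by
  simp only [qPoch_succ]
  linear_combination α ^ (n + 2) * qPoch q q n * (1 - q ^ (n + 1)) * hy n
    + α ^ (n + 1) * qPoch q q n * (1 - q ^ (n + 1)) * y (n + 1) * hs

theorem SolvesConvergentRecurrence.eq_add {α q : ℂ} {X : ℕ → ℂ}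
    (hX : SolvesConvergentRecurrence α q X) (n : ℕ) :
    X n = X 0 * (Qseq' α q n - Pseq' α q n) + X 1 * Pseq' α q n := by
  induction n using Nat.twoStepInduction with
  | zero => simp [Pseq', Qseq']
  | one => simp [Pseq', Qseq']
  | more n h0 h1 =>
    rw [hX n, h0, h1, Pseq', Qseq']
    ring

theorem SolvesQRecurrence.scaled_eq_convergents {q s α : ℂ} {y : ℕ → ℂ}
    (hy : SolvesQRecurrence q s y) (hs : α * s = 1) (n : ℕ) :
    α ^ n * qPoch q q n * y n
      = y 0 * (Qseq' α q n - Pseq' α q n) + α * (1 - q) * y 1 * Pseq' α q n := by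
  simpa [qPoch, mul_assoc] using (hy.solvesConvergentRecurrence hs).eq_add n

theorem scaled_psi_combination_eq {q lam mu α : ℂ} (hq : ‖q‖ < 1)
    (hlam : ∀ k : ℕ, lam ^ 2 * q ^ (k + 1) ≠ 1)
    (hmu : ∀ k : ℕ, mu ^ 2 * q ^ (k + 1) ≠ 1) (hlam_mu : lam * mu = 1)
    (hα : α * (lam + mu) = 1) (a b : ℂ) (n : ℕ) :
    α ^ (n + 1) * qPoch q q (n + 1)
        * (a * mu ^ n * psi q mu (q ^ (n + 2)) + b * lam ^ n * psi q lam (q ^ (n + 2)))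
      = (lam * a * psi q mu q + mu * b * psi q lam q) * (Qseq' α q (n + 1) - Pseq' α q (n + 1))
        + α * (1 - q) * (a * psi q mu (q ^ 2) + b * psi q lam (q ^ 2)) * Pseq' α q (n + 1) := by
  have hu := solvesQRecurrence_pow_mul_psi hq hmu (mul_comm lam mu ▸ hlam_mu)
  have hv := solvesQRecurrence_pow_mul_psi hq hlam hlam_mu
  rw [add_comm] at hu
  have h := (hu.mul_add_mul hv (lam * a) (mu * b)).scaled_eq_convergents hα (n + 1)
  simp only [pow_zero, pow_one, zero_add, one_mul] at h
  linear_combination h + (α * (1 - q) * (a * psi q mu (q ^ 2) + b * psi q lam (q ^ 2))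
      * Pseq' α q (n + 1) - α ^ (n + 1) * qPoch q q (n + 1)
      * (a * mu ^ n * psi q mu (q ^ (n + 2)) + b * lam ^ n * psi q lam (q ^ (n + 2)))) * hlam_mu

theorem div_eq_one_div_one_sub_div {𝕜 : Type*} [Field 𝕜] {P Q B D c s : 𝕜} (hs : s ≠ 0)
    (hQ : Q ≠ 0) (hD : D ≠ 0) (hDB : D ≠ B) (hsB : s * B = c * (Q - P))
    (hsD : s * D = -c * P) :
    P / Q = 1 / (1 - B / D) := by
  rw [one_sub_div hD, one_div_div, div_eq_div_iff hQ (sub_ne_zero.2 hDB)]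
  apply mul_left_cancel₀ hs
  linear_combination (P - Q) * hsD - P * hsB

theorem convergents_qSecant (q lam : ℂ) (hq : ‖q‖ < 1) (hlam : lam ≠ 0)
    (hlam2 : 1 + lam ^ 2 ≠ 0)
    (hk : ∀ k : ℕ, 1 ≤ k → lam ^ 2 * q ^ k ≠ 1 ∧ lam ^ 2 ≠ q ^ k)
    (w : ℕ) (A D : ℂ)
    (hA : A = (1 / lam) ^ w * psi q lam (q ^ 2) * psi q (1 / lam) (q ^ (w + 2))
        - lam ^ w * psi q (1 / lam) (q ^ 2) * psi q lam (q ^ (w + 2)))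
    (hD : D = (1 + lam ^ 2) *
        ((1 / lam) ^ w * psi q lam q * psi q (1 / lam) (q ^ (w + 2))
          - lam ^ (w + 2) * psi q (1 / lam) q * psi q lam (q ^ (w + 2))))
    (hQ : Qseq' (lam / (1 + lam ^ 2)) q (w + 1) ≠ 0)
    (hD0 : D ≠ 0) (hDA : D ≠ lam ^ 2 * (1 - q) * A) :
    Pseq' (lam / (1 + lam ^ 2)) q (w + 1) / Qseq' (lam / (1 + lam ^ 2)) q (w + 1)
      = 1 / (1 - lam ^ 2 * (1 - q) * A / D) := by
  have hlam_inv : ∀ k : ℕ, (1 / lam) ^ 2 * q ^ (k + 1) ≠ 1 := fun k h =>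
    (hk (k + 1) k.succ_pos).2 (by field_simp at h; exact h.symm)
  have hα : lam / (1 + lam ^ 2) * (lam + 1 / lam) = 1 := by field_simp; ring
  have hcomb := scaled_psi_combination_eq hq (fun k => (hk (k + 1) k.succ_pos).1) hlam_inv
    (mul_one_div_cancel hlam) hα (n := w)
  have hs : (lam / (1 + lam ^ 2)) ^ (w + 1) * qPoch q q (w + 1) ≠ 0 :=
    mul_ne_zero (pow_ne_zero _ (div_ne_zero hlam hlam2)) (qPoch_self_ne_zero hq _)
  refine div_eq_one_div_one_sub_div hs hQ hD0 hDA
    (c := lam ^ 2 * (1 - q) * (lam * psi q lam (q ^ 2) * psi q (1 / lam) q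
      - 1 / lam * psi q (1 / lam) (q ^ 2) * psi q lam q)) ?_ ?_
  · rw [hA]
    linear_combination lam ^ 2 * (1 - q) * hcomb (psi q lam (q ^ 2)) (-psi q (1 / lam) (q ^ 2))
  · rw [hD]
    linear_combination (norm := skip)
      hcomb ((1 + lam ^ 2) * psi q lam q) (-((1 + lam ^ 2) * lam ^ 2 * psi q (1 / lam) q))
    field_simp
    ring
end

section
/- Let x, y, q ∈ ℂ with |x| < 1, |y| < 1 and |q| ≤ 1. Then both series below converge absolutely and Σ_{n=0}^∞ x^n/(1 − y q^n) = Σ_{n=0}^∞ x^n y^n q^{n²} (1 − x y q^{2n}) / ((1 − x q^n)(1 − y q^n)). -/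
/-!
Both sides are the sum of `x ^ n * y ^ m * q ^ (n * m)` over all lattice points `(n, m)`, a family
that is absolutely summable because its terms are bounded by `‖x‖ ^ n * ‖y‖ ^ m`. Summing row by
row gives a geometric series in `y * q ^ n` for each `n`, hence the left-hand side. Grouping instead
by `k = min n m` splits the lattice into hooks `{(k + j, k)} ∪ {(k, k + j + 1)}`; each arm is again
geometric, and the two arms of the `k`-th hook add up to the `k`-th term of the right-hand side.
-/

section RectangleSeries

variable {𝕜 : Type*} [NormedField 𝕜] {x y q : 𝕜}

lemma norm_mul_pow_lt_one (hy : ‖y‖ < 1) (hq : ‖q‖ ≤ 1) (n : ℕ) : ‖y * q ^ n‖ < 1 := by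
  rw [norm_mul, norm_pow]
  exact lt_of_le_of_lt (mul_le_of_le_one_right (norm_nonneg y) (pow_le_one₀ (norm_nonneg q) hq)) hy

lemma one_sub_mul_pow_ne_zero (hy : ‖y‖ < 1) (hq : ‖q‖ ≤ 1) (n : ℕ) : 1 - y * q ^ n ≠ 0 := by
  rw [sub_ne_zero]
  intro h
  simpa [← h] using norm_mul_pow_lt_one hy hq n

def rectangleTerm (x y q : 𝕜) (p : ℕ × ℕ) : 𝕜 := x ^ p.1 * y ^ p.2 * q ^ (p.1 * p.2)

lemma rectangleTerm_swap (p : ℕ × ℕ) : rectangleTerm y x q p.swap = rectangleTerm x y q p := by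
  simp only [rectangleTerm, Prod.fst_swap, Prod.snd_swap, mul_comm]

lemma hook_sum_eq (hx : ‖x‖ < 1) (hy : ‖y‖ < 1) (hq : ‖q‖ ≤ 1) (k : ℕ) :
    y ^ k * (x * q ^ k) ^ k / (1 - x * q ^ k) + x ^ k * (y * q ^ k) ^ (k + 1) / (1 - y * q ^ k)
      = x ^ k * y ^ k * q ^ k ^ 2 * (1 - x * y * q ^ (2 * k)) /
          ((1 - x * q ^ k) * (1 - y * q ^ k)) := by
  have hxk := one_sub_mul_pow_ne_zero hx hq k
  have hyk := one_sub_mul_pow_ne_zero hy hq k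
  rw [div_add_div _ _ hxk hyk]
  congr 1
  ring

lemma hasSum_rectangleTerm_ray (hy : ‖y‖ < 1) (hq : ‖q‖ ≤ 1) (n a : ℕ) :
    HasSum (fun j => rectangleTerm x y q (n, a + j))
      (x ^ n * (y * q ^ n) ^ a / (1 - y * q ^ n)) := by
  have hgeom := (hasSum_geometric_of_norm_lt_one (norm_mul_pow_lt_one hy hq n)).mul_left
    (x ^ n * (y * q ^ n) ^ a)
  have hray : (fun j => rectangleTerm x y q (n, a + j))
      = fun j => x ^ n * (y * q ^ n) ^ a * (y * q ^ n) ^ j := by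
    funext j
    simp only [rectangleTerm]
    ring
  rwa [hray, div_eq_mul_inv]

variable [CompleteSpace 𝕜]

lemma summable_rectangleTerm (hx : ‖x‖ < 1) (hy : ‖y‖ < 1) (hq : ‖q‖ ≤ 1) :
    Summable (rectangleTerm x y q) := by
  refine Summable.of_norm_bounded (g := fun p : ℕ × ℕ => ‖x‖ ^ p.1 * ‖y‖ ^ p.2)
    ((summable_geometric_of_lt_one (norm_nonneg x) hx).mul_of_nonneg
      (summable_geometric_of_lt_one (norm_nonneg y) hy) (fun _ => by positivity)
      (fun _ => by positivity)) fun p => ?_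
  simp only [rectangleTerm, norm_mul, norm_pow]
  exact mul_le_of_le_one_right (by positivity) (pow_le_one₀ (norm_nonneg q) hq)

lemma hasSum_rectangleTerm_rows (hx : ‖x‖ < 1) (hy : ‖y‖ < 1) (hq : ‖q‖ ≤ 1) :
    HasSum (fun n => x ^ n / (1 - y * q ^ n)) (∑' p, rectangleTerm x y q p) :=
  (summable_rectangleTerm hx hy hq).hasSum.prod_fiberwise fun n => by
    simpa using hasSum_rectangleTerm_ray (x := x) hy hq n 0

def hookSplit : ℕ × ℕ ⊕ ℕ × ℕ → ℕ × ℕ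
  | .inl (k, j) => (k + j, k)
  | .inr (k, j) => (k, k + j + 1)

lemma hookSplit_bijective : Function.Bijective hookSplit := by
  refine ⟨?_, fun ⟨n, m⟩ => ?_⟩
  · rintro (⟨k, j⟩ | ⟨k, j⟩) (⟨k', j'⟩ | ⟨k', j'⟩) h <;>
      simp only [hookSplit, Prod.mk.injEq, Sum.inl.injEq, Sum.inr.injEq, reduceCtorEq] at h ⊢ <;>
      omega
  · rcases le_or_gt m n with hmn | hnm
    · exact ⟨.inl (m, n - m), by simp only [hookSplit]; congr 1; omega⟩
    · exact ⟨.inr (n, m - n - 1), by simp only [hookSplit]; congr 1; omega⟩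

lemma hasSum_rectangleTerm_hooks (hx : ‖x‖ < 1) (hy : ‖y‖ < 1) (hq : ‖q‖ ≤ 1) :
    HasSum (fun k => y ^ k * (x * q ^ k) ^ k / (1 - x * q ^ k)
        + x ^ k * (y * q ^ k) ^ (k + 1) / (1 - y * q ^ k))
      (∑' p, rectangleTerm x y q p) := by
  have hsplit := (Equiv.ofBijective _ hookSplit_bijective).hasSum_iff.mpr
    (summable_rectangleTerm hx hy hq).hasSum
  have hsummable := hsplit.summable
  have hsummable_inl := hsummable.comp_injective Sum.inl_injective
  have hsummable_inr := hsummable.comp_injective Sum.inr_injective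
  have horizontal := hsummable_inl.hasSum.prod_fiberwise fun k => by
    simpa [hookSplit, ← rectangleTerm_swap (x := x), add_comm k] using
      hasSum_rectangleTerm_ray (x := y) hx hq k k
  have vertical := hsummable_inr.hasSum.prod_fiberwise fun k => by
    simpa [hookSplit, add_right_comm k] using hasSum_rectangleTerm_ray (x := x) hy hq k (k + 1)
  rw [hsplit.unique (HasSum.sum hsummable_inl.hasSum hsummable_inr.hasSum)]
  exact horizontal.add vertical

end RectangleSeries

theorem rectangle_identity (x y q : ℂ) (hx : ‖x‖ < 1)
    (hy : ‖y‖ < 1) (hq : ‖q‖ ≤ 1) :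
    (Summable fun n : ℕ => ‖x ^ n / (1 - y * q ^ n)‖) ∧
    (Summable fun n : ℕ =>
      ‖x ^ n * y ^ n * q ^ n ^ 2 * (1 - x * y * q ^ (2 * n)) /
        ((1 - x * q ^ n) * (1 - y * q ^ n))‖) ∧
    ∑' n : ℕ, x ^ n / (1 - y * q ^ n)
      = ∑' n : ℕ, x ^ n * y ^ n * q ^ n ^ 2 * (1 - x * y * q ^ (2 * n)) /
          ((1 - x * q ^ n) * (1 - y * q ^ n)) := by
  have rows := hasSum_rectangleTerm_rows hx hy hq
  have hooks := hasSum_rectangleTerm_hooks hx hy hq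
  simp only [hook_sum_eq hx hy hq] at hooks
  exact ⟨summable_norm_iff.mpr rows.summable, summable_norm_iff.mpr hooks.summable,
    rows.tsum_eq.trans hooks.tsum_eq.symm⟩
end

section
/- Let x, q ∈ ℂ with |x| < 1, |q| < 1, x ≠ 0, and 1 + x q^k ≠ 0 for all integers k ≥ 0. Let S = Σ_{k=0}^∞ x^k/(1 + x q^k). Then Σ_{k=0}^∞ (1 − q^{k+1}) x^k / ((1 + x q^k)(1 + x q^{k+1})) = ((q − x²) S − q) / (x² (q − 1)), all series converging absolutely. -/
/-!
With `a k = x ^ k / (1 + x * q ^ k)`, partial fractions in `t = q ^ k` write the `k`-th term as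
`c * a k + d * a (k + 1)` for constants `c, d` depending only on `x` and `q`, so the series is
`(c + d) * S - d * a 0`. Summability holds because `1 + x * q ^ k → 1`, so `a k = O(‖x‖ ^ k)`.
-/

open Filter Topology

section

variable {𝕜 : Type*} [NormedField 𝕜]

lemma tendsto_one_add_mul_pow {x q : 𝕜} (hq : ‖q‖ < 1) :
    Tendsto (fun k : ℕ => 1 + x * q ^ k) atTop (𝓝 1) := by
  simpa using ((tendsto_pow_atTop_nhds_zero_of_norm_lt_one hq).const_mul x).const_add 1

lemma summable_norm_pow_div_one_add_mul_pow {x q : 𝕜} (hx : ‖x‖ < 1) (hq : ‖q‖ < 1) :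
    Summable fun k : ℕ => ‖x ^ k / (1 + x * q ^ k)‖ := by
  have hinv : Tendsto (fun k : ℕ => ‖(1 + x * q ^ k)⁻¹‖) cofinite (𝓝 1) := by
    rw [Nat.cofinite_eq_atTop]
    simpa using ((tendsto_one_add_mul_pow hq).inv₀ one_ne_zero).norm
  have hgeo : Summable fun k : ℕ => ‖‖x‖ ^ k‖ := by
    simpa using summable_geometric_of_lt_one (norm_nonneg x) hx
  simpa [div_eq_mul_inv] using hgeo.mul_tendsto_const hinv

end

lemma tsum_mul_add_mul_succ {K : Type*} [Field K] [TopologicalSpace K] [IsTopologicalRing K]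
    [T2Space K] {a : ℕ → K} (ha : Summable a) (c d : K) :
    ∑' k, (c * a k + d * a (k + 1)) = (c + d) * ∑' k, a k - d * a 0 := by
  have ha1 : Summable fun k => a (k + 1) := (summable_nat_add_iff 1).mpr ha
  rw [(ha.mul_left c).tsum_add (ha1.mul_left d), tsum_mul_left, tsum_mul_left,
    ha.tsum_eq_zero_add]
  ring

lemma one_sub_mul_div_mul_eq_partial_fractions {K : Type*} [Field K] {x q t : K} (hx : x ≠ 0) (hq : q ≠ 1)
    (ht : 1 + x * t ≠ 0) (hqt : 1 + x * (q * t) ≠ 0) :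
    (1 - q * t) / ((1 + x * t) * (1 + x * (q * t))) =
      -(q + x) / (x * (q - 1)) / (1 + x * t) + q * (x + 1) / (x * (q - 1)) / (1 + x * (q * t)) := by
  have hq1 : q - 1 ≠ 0 := sub_ne_zero.mpr hq
  rw [div_div, div_div, div_add_div _ _ (mul_ne_zero (mul_ne_zero hx hq1) ht)
    (mul_ne_zero (mul_ne_zero hx hq1) hqt), div_eq_div_iff (mul_ne_zero ht hqt) (by simp [*])]
  ring

theorem partialFractions_qSecant (x q : ℂ) (hx : ‖x‖ < 1)
    (hq : ‖q‖ < 1) (hx0 : x ≠ 0)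
    (hden : ∀ k : ℕ, 1 + x * q ^ k ≠ 0) :
    (Summable fun k : ℕ => ‖x ^ k / (1 + x * q ^ k)‖) ∧
    (Summable fun k : ℕ =>
      ‖(1 - q ^ (k + 1)) * x ^ k / ((1 + x * q ^ k) * (1 + x * q ^ (k + 1)))‖) ∧
    ∑' k : ℕ, (1 - q ^ (k + 1)) * x ^ k / ((1 + x * q ^ k) * (1 + x * q ^ (k + 1)))
      = ((q - x ^ 2) * (∑' k : ℕ, x ^ k / (1 + x * q ^ k)) - q) /
          (x ^ 2 * (q - 1)) := by
  set a : ℕ → ℂ := fun k => x ^ k / (1 + x * q ^ k)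
  set c : ℂ := -(q + x) / (x * (q - 1))
  set d : ℂ := q * (x + 1) / (x ^ 2 * (q - 1))
  have hq1 : q ≠ 1 := by rintro rfl; simp at hq
  have hq1' : q - 1 ≠ 0 := sub_ne_zero.mpr hq1
  have hterm : ∀ k : ℕ, (1 - q ^ (k + 1)) * x ^ k / ((1 + x * q ^ k) * (1 + x * q ^ (k + 1)))
      = c * a k + d * a (k + 1) := fun k => by
    have hk1 := hden (k + 1)
    rw [pow_succ'] at hk1 ⊢
    calc (1 - q * q ^ k) * x ^ k / ((1 + x * q ^ k) * (1 + x * (q * q ^ k)))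
        = x ^ k * ((1 - q * q ^ k) / ((1 + x * q ^ k) * (1 + x * (q * q ^ k)))) := by ring
      _ = c * a k + d * a (k + 1) := by
        rw [one_sub_mul_div_mul_eq_partial_fractions hx0 hq1 (hden k) hk1]
        simp only [a, c, d, pow_succ']
        field_simp
  have ha : Summable fun k => ‖a k‖ := summable_norm_pow_div_one_add_mul_pow hx hq
  have ha1 : Summable fun k => a (k + 1) := (summable_nat_add_iff 1).mpr ha.of_norm
  refine ⟨ha, ?_, ?_⟩
  · simpa only [hterm] using summable_norm_iff.mpr ((ha.of_norm.mul_left c).add (ha1.mul_left d))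
  · have h1x : 1 + x ≠ 0 := by simpa using hden 0
    rw [tsum_congr hterm, tsum_mul_add_mul_succ ha.of_norm]
    simp only [a, c, d]
    field_simp
    ring
end
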